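/- Sensitivity of the DFA bias update for a fully connected layer: fix a matrix B with spectral norm ‖B‖₂ ≤ β and constants γ, τ_e ≥ 0. Suppose to each record d are associated vectors e(d) and w(d) with ‖e(d)‖₂ ≤ τ_e and |w(d)[i]| ≤ γ for every coordinate i. For a minibatch (d_1, …, d_m), let ξ = (1/m) Σ_{i=1}^m (B e(d_i)) ⊙ w(d_i). Then for any two minibatches of size m differing in exactly one record, the Euclidean norm of the difference of the corresponding values of ξ is at most 2 γ β τ_e / m. -/

import Mathlib

/-- The Hadamard (elementwise) product of two vectors. -/
noncomputable def hadamard {n : ℕ} (u w : EuclideanSpace ℝ (Fin n)) :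
    EuclideanSpace ℝ (Fin n) :=
  WithLp.toLp 2 (fun i => u i * w i)

/-- Matrix-vector multiplication, valued in Euclidean space. -/
noncomputable def mulVecE {p q : ℕ} (B : Matrix (Fin p) (Fin q) ℝ)
    (v : EuclideanSpace ℝ (Fin q)) : EuclideanSpace ℝ (Fin p) :=
  WithLp.toLp 2 (fun i => ∑ j, B i j * v j)

/-- The spectral norm of a real matrix: the operator norm induced by Euclidean
vector norms (the largest singular value). -/
noncomputable def matrixSpectralNorm {p q : ℕ} (B : Matrix (Fin p) (Fin q) ℝ) : ℝ :=
  ‖LinearMap.toContinuousLinearMap (Matrix.toEuclideanLin B)‖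

lemma mulVecE_eq {p q : ℕ} (B : Matrix (Fin p) (Fin q) ℝ)
    (v : EuclideanSpace ℝ (Fin q)) :
    mulVecE B v = Matrix.toEuclideanLin B v := by
  ext i
  simp [mulVecE, Matrix.toEuclideanLin_apply, Matrix.mulVec, dotProduct]

lemma mulVecE_norm_le {p q : ℕ} (B : Matrix (Fin p) (Fin q) ℝ)
    (v : EuclideanSpace ℝ (Fin q)) :
    ‖mulVecE B v‖ ≤ matrixSpectralNorm B * ‖v‖ := by
  rw [mulVecE_eq]
  exact (LinearMap.toContinuousLinearMap (Matrix.toEuclideanLin B)).le_opNorm v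

lemma hadamard_norm_le {n : ℕ} (u w : EuclideanSpace ℝ (Fin n)) (γ : ℝ)
    (hγ : 0 ≤ γ) (hw : ∀ i, |w i| ≤ γ) : ‖hadamard u w‖ ≤ γ * ‖u‖ := by
  have h1 : ‖hadamard u w‖ = Real.sqrt (∑ i, (u i * w i) ^ 2) := by
    rw [EuclideanSpace.norm_eq]
    congr 1; refine Finset.sum_congr rfl fun i _ => ?_
    simp [hadamard, Real.norm_eq_abs, ← abs_mul, sq_abs]
  have h2 : ‖u‖ = Real.sqrt (∑ i, (u i) ^ 2) := by
    rw [EuclideanSpace.norm_eq]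
    congr 1; exact Finset.sum_congr rfl fun i _ => by simp [Real.norm_eq_abs, sq_abs]
  rw [h1, h2]
  have : γ * Real.sqrt (∑ i, (u i) ^ 2) = Real.sqrt (γ ^ 2 * ∑ i, (u i) ^ 2) := by
    rw [Real.sqrt_mul (sq_nonneg γ), Real.sqrt_sq hγ]
  rw [this]
  apply Real.sqrt_le_sqrt
  rw [Finset.mul_sum]
  refine Finset.sum_le_sum fun i _ => ?_
  have := hw i
  calc (u i * w i) ^ 2 = (w i)^2 * (u i)^2 := by ring
    _ ≤ γ^2 * (u i)^2 := by
        apply mul_le_mul_of_nonneg_right _ (sq_nonneg _)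
        calc (w i)^2 = |w i|^2 := (sq_abs _).symm
          _ ≤ γ^2 := by apply pow_le_pow_left₀ (abs_nonneg _) this

/-- Sensitivity of the DFA bias update `ξ = (1/m) Σᵢ (B e(dᵢ)) ⊙ w(dᵢ)` for a fully
connected layer: if `‖B‖₂ ≤ β`, `‖e(d)‖₂ ≤ τ_e`, and `|w(d)[i]| ≤ γ` coordinatewise
(with `γ ≥ 0`) for every record `d`, then for two minibatches of size `m` that agree
in all but one position, the Euclidean norm of the difference of the corresponding
values of `ξ` is at most `2 γ β τ_e / m`. -/
theorem dfa_bias_update_sensitivity {D : Type*} {nl K : ℕ} {m : ℕ} (hm : 0 < m)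
    (B : Matrix (Fin nl) (Fin K) ℝ) (β γ τe : ℝ) (hγ : 0 ≤ γ)
    (hB : matrixSpectralNorm B ≤ β)
    (e : D → EuclideanSpace ℝ (Fin K)) (he : ∀ d, ‖e d‖ ≤ τe)
    (w : D → EuclideanSpace ℝ (Fin nl)) (hw : ∀ d i, |w d i| ≤ γ)
    (d d' : Fin m → D) (j : Fin m) (hagree : ∀ i, i ≠ j → d i = d' i) :
    ‖(1 / (m : ℝ)) • ∑ i, hadamard (mulVecE B (e (d i))) (w (d i)) -
     (1 / (m : ℝ)) • ∑ i, hadamard (mulVecE B (e (d' i))) (w (d' i))‖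
      ≤ 2 * γ * β * τe / m := by
  set f : D → EuclideanSpace ℝ (Fin nl) := fun x => hadamard (mulVecE B (e x)) (w x)
  have hβ : 0 ≤ β := le_trans (norm_nonneg _) hB
  have hτ : 0 ≤ τe := le_trans (norm_nonneg _) (he (d j))
  have key : ∀ x : D, ‖f x‖ ≤ γ * (β * τe) := fun x => by
    calc ‖f x‖ ≤ γ * ‖mulVecE B (e x)‖ :=
          hadamard_norm_le _ _ γ hγ (hw x)
      _ ≤ γ * (β * τe) := by
          apply mul_le_mul_of_nonneg_left _ hγ
          calc ‖mulVecE B (e x)‖ ≤ matrixSpectralNorm B * ‖e x‖ := mulVecE_norm_le _ _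
            _ ≤ β * τe := mul_le_mul hB (he x) (norm_nonneg _) hβ
  have hsum : (∑ i, f (d i)) - (∑ i, f (d' i)) = f (d j) - f (d' j) := by
    rw [← Finset.sum_sub_distrib]
    rw [Finset.sum_eq_single j]
    · intro i _ hi
      rw [hagree i hi, sub_self]
    · intro h; exact absurd (Finset.mem_univ j) h
  rw [← smul_sub, hsum, norm_smul]
  have hmr : (0:ℝ) < m := Nat.cast_pos.mpr hm
  have : ‖(1 / (m:ℝ))‖ = 1 / m := by
    rw [Real.norm_eq_abs, abs_of_pos (by positivity)]
  rw [this, div_mul_eq_mul_div, one_mul, div_le_div_iff₀ hmr hmr]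
  have hn : ‖f (d j) - f (d' j)‖ ≤ 2 * γ * β * τe := by
    calc ‖f (d j) - f (d' j)‖ ≤ ‖f (d j)‖ + ‖f (d' j)‖ := norm_sub_le _ _
      _ ≤ γ * (β * τe) + γ * (β * τe) := add_le_add (key _) (key _)
      _ = 2 * γ * β * τe := by ring
  calc ‖f (d j) - f (d' j)‖ * m ≤ (2 * γ * β * τe) * m :=
        mul_le_mul_of_nonneg_right hn (le_of_lt hmr)
    _ = 2 * γ * β * τe * m := rfl
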